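/- arXiv:0905.1915 — 6 statements merged into one kernel-verified Lean document; each statement's English description precedes it below -/
import Mathlib

section
/- If G and H are reconstructions of each other with at least three vertices, then G and H have the same degree sequence (as multisets). -/
open SimpleGraph

def IsReconstruction {V W : Type*} (G : SimpleGraph V) (H : SimpleGraph W) : Prop :=
  ∃ f : V ≃ W, ∀ v : V,
    Nonempty ((G.induce {w | w ≠ v}) ≃g (H.induce {w | w ≠ f v}))

open Finset in
lemma key {V : Type*} [Fintype V] (G : SimpleGraph V) [DecidableRel G.Adj] (v : V) :
    Nat.card (G.induce {w | w ≠ v}).edgeSet + G.degree v = Nat.card G.edgeSet := by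
  classical
  rw [Nat.card_eq_fintype_card, Nat.card_eq_fintype_card, ← edgeFinset_card,
    ← edgeFinset_card, ← card_incidenceFinset_eq_degree, incidenceFinset_eq_filter]
  have h1 : ((G.induce {w | w ≠ v}).edgeFinset).card
      = (G.edgeFinset.filter (fun e => ¬ v ∈ e)).card := by
    apply Finset.card_bij (fun e _ => Sym2.map Subtype.val e)
    · rintro e he
      induction e with
      | _ a b =>
        simp only [mem_edgeFinset, mem_edgeSet] at he
        simp only [Finset.mem_filter, mem_edgeFinset, Sym2.map_pair_eq, mem_edgeSet,
          Sym2.mem_iff]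
        exact ⟨he, by rintro (h|h) <;> [exact a.2 h.symm; exact b.2 h.symm]⟩
    · intro e₁ _ e₂ _ h
      exact Sym2.map.injective Subtype.val_injective h
    · rintro e he
      simp only [Finset.mem_filter, mem_edgeFinset, Sym2.mem_iff] at he
      induction e with
      | _ a b =>
        obtain ⟨hadj, hv⟩ := he
        refine ⟨s(⟨a, fun h => hv (by simp [h])⟩, ⟨b, fun h => hv (by simp [h])⟩), ?_, rfl⟩
        simpa [mem_edgeFinset] using hadj
  rw [h1, add_comm, Finset.card_filter_add_card_filter_not]


/-- Reconstructions have the same degree sequence (as multisets). -/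
theorem stmt_2 {V W : Type*} [Fintype V] [Fintype W]
    (G : SimpleGraph V) (H : SimpleGraph W)
    [DecidableRel G.Adj] [DecidableRel H.Adj]
    (hrec : IsReconstruction G H) (hcard : 3 ≤ Fintype.card V) :
    Multiset.map (fun v => G.degree v) Finset.univ.val =
      Multiset.map (fun w => H.degree w) Finset.univ.val := by
  classical
  obtain ⟨f, hf⟩ := hrec
  have hcardW : Fintype.card W = Fintype.card V := (Fintype.card_congr f).symm
  have hdeck : ∀ v : V, Nat.card (G.induce {w | w ≠ v}).edgeSet
      = Nat.card (H.induce {w | w ≠ f v}).edgeSet := fun v =>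
    Nat.card_congr ((hf v).some.mapEdgeSet)
  -- sums of deck edge counts
  have hsum : ∑ v : V, Nat.card (G.induce {w | w ≠ v}).edgeSet
      = ∑ w : W, Nat.card (H.induce {w' | w' ≠ w}).edgeSet := by
    rw [← Equiv.sum_comp f (fun w => Nat.card (H.induce {w' | w' ≠ w}).edgeSet)]
    exact Finset.sum_congr rfl fun v _ => hdeck v
  set n := Fintype.card V with hn
  have hG : ∑ v : V, Nat.card (G.induce {w | w ≠ v}).edgeSet
      + 2 * Nat.card G.edgeSet = n * Nat.card G.edgeSet := by
    have := Finset.sum_congr rfl (fun v (_ : v ∈ Finset.univ) => key G v)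
    rw [Finset.sum_add_distrib, G.sum_degrees_eq_twice_card_edges, Finset.sum_const,
      Finset.card_univ, smul_eq_mul, edgeFinset_card, ← Nat.card_eq_fintype_card] at this
    exact this
  have hH : ∑ w : W, Nat.card (H.induce {w' | w' ≠ w}).edgeSet
      + 2 * Nat.card H.edgeSet = n * Nat.card H.edgeSet := by
    have := Finset.sum_congr rfl (fun w (_ : w ∈ Finset.univ) => key H w)
    rw [Finset.sum_add_distrib, H.sum_degrees_eq_twice_card_edges, Finset.sum_const,
      Finset.card_univ, smul_eq_mul, edgeFinset_card, ← Nat.card_eq_fintype_card,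
      hcardW] at this
    exact this
  -- edge counts equal
  have hE : Nat.card G.edgeSet = Nat.card H.edgeSet := by
    have h1 : (n - 2) * Nat.card G.edgeSet = (n - 2) * Nat.card H.edgeSet := by
      rw [Nat.sub_mul, Nat.sub_mul]
      omega
    have hn2 : n - 2 ≠ 0 := by omega
    exact Nat.eq_of_mul_eq_mul_left (Nat.pos_of_ne_zero hn2) h1
  have hdeg : ∀ v : V, G.degree v = H.degree (f v) := by
    intro v
    have h1 := key G v
    have h2 := key H (f v)
    have h3 := hdeck v
    omega
  calc Multiset.map (fun v => G.degree v) Finset.univ.val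
      = Multiset.map (fun v => H.degree (f v)) Finset.univ.val :=
        Multiset.map_congr rfl fun v _ => hdeg v
    _ = Multiset.map (fun w => H.degree w) (Finset.univ.val.map f) := by
        rw [Multiset.map_map]; rfl
    _ = Multiset.map (fun w => H.degree w) Finset.univ.val := by
        congr 1
        have := Finset.map_univ_equiv f
        rw [← this]
        rfl
end

section
/- If G and H are reconstructions of each other with at least three vertices, then for every natural number k, G and H have the same number of vertices of degree k. -/
/-!
Deleting a vertex `v` removes exactly `deg v` edges, and every edge survives in all but two of the
vertex-deleted subgraphs, so `∑ᵥ |E(G - v)| = (n - 2) |E(G)|`. The deck therefore determines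
`|E(G)|` as soon as `n ≥ 3`, and then each card `G - v` determines `deg v = |E(G)| - |E(G - v)|`;
the bijection between the decks thus preserves degrees.
-/

open SimpleGraph

open Finset

namespace SimpleGraph

variable {V : Type*} [Fintype V] [DecidableEq V] (G : SimpleGraph V) [DecidableRel G.Adj]

theorem card_edgeFinset_induce_compl_singleton_add_degree (v : V) :
    #(G.induce {v}ᶜ).edgeFinset + G.degree v = #G.edgeFinset := by
  rw [card_edgeFinset_induce_compl_singleton, card_edgeFinset_deleteIncidenceSet,
    Nat.sub_add_cancel (G.degree_le_card_edgeFinset v)]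

theorem sum_card_edgeFinset_induce_compl_singleton_add_two_mul :
    ∑ v, #(G.induce {v}ᶜ).edgeFinset + 2 * #G.edgeFinset = Fintype.card V * #G.edgeFinset := by
  rw [← sum_degrees_eq_twice_card_edges, ← sum_add_distrib]
  simp [card_edgeFinset_induce_compl_singleton_add_degree]

end SimpleGraph

namespace IsReconstruction

variable {V W : Type*} [Fintype V] [Fintype W] [DecidableEq V] [DecidableEq W]
  {G : SimpleGraph V} {H : SimpleGraph W} [DecidableRel G.Adj] [DecidableRel H.Adj]

theorem exists_equiv_card_edgeFinset_induce_eq (hrec : IsReconstruction G H) :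
    ∃ f : V ≃ W, ∀ v, #(G.induce {v}ᶜ).edgeFinset = #(H.induce {f v}ᶜ).edgeFinset :=
  let ⟨f, hiso⟩ := hrec
  ⟨f, fun v ↦ (hiso v).some.card_edgeFinset_eq⟩

theorem card_edgeFinset_eq (hrec : IsReconstruction G H) (hcard : 3 ≤ Fintype.card V) :
    #G.edgeFinset = #H.edgeFinset := by
  obtain ⟨f, hf⟩ := hrec.exists_equiv_card_edgeFinset_induce_eq
  have hdeck : ∑ v, #(G.induce {v}ᶜ).edgeFinset = ∑ w, #(H.induce {w}ᶜ).edgeFinset := by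
    rw [← f.sum_comp]
    exact sum_congr rfl fun v _ ↦ hf v
  have hG := G.sum_card_edgeFinset_induce_compl_singleton_add_two_mul
  have hH := H.sum_card_edgeFinset_induce_compl_singleton_add_two_mul
  rw [← Fintype.card_congr f] at hH
  refine Nat.eq_of_mul_eq_mul_left (by omega : 0 < Fintype.card V - 2) ?_
  rw [Nat.sub_mul, Nat.sub_mul]
  omega

theorem exists_equiv_degree_eq (hrec : IsReconstruction G H) (hcard : 3 ≤ Fintype.card V) :
    ∃ f : V ≃ W, ∀ v, G.degree v = H.degree (f v) := by
  have hedges := hrec.card_edgeFinset_eq hcard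
  obtain ⟨f, hf⟩ := hrec.exists_equiv_card_edgeFinset_induce_eq
  refine ⟨f, fun v ↦ ?_⟩
  have hG := G.card_edgeFinset_induce_compl_singleton_add_degree v
  have hH := H.card_edgeFinset_induce_compl_singleton_add_degree (f v)
  have hdeck := hf v
  omega

end IsReconstruction

/-- Reconstructions have the same number of vertices of each degree. -/
theorem stmt_3 {V W : Type*} [Fintype V] [Fintype W]
    (G : SimpleGraph V) (H : SimpleGraph W)
    [DecidableRel G.Adj] [DecidableRel H.Adj]
    (hrec : IsReconstruction G H) (hcard : 3 ≤ Fintype.card V) :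
    ∀ k : ℕ, Nat.card {v : V // G.degree v = k} = Nat.card {w : W // H.degree w = k} := by
  classical
  obtain ⟨f, hf⟩ := hrec.exists_equiv_degree_eq hcard
  exact fun k ↦ Nat.card_congr (f.subtypeEquiv fun v ↦ by rw [hf v])
end

section
/- Kelly's lemma for edge-colored graphs: Let G and H be finite simple graphs with edge colorings into a set of Λ colors, and suppose they are reconstructions of each other as colored graphs. Then for every colored graph F with |V(F)| < |V(G)|, the number of color-preserving embeddings of F as a subgraph of G equals that number for H. -/
open SimpleGraph

/-- A color-preserving isomorphism between edge-colored graphs. -/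
structure ColoredIso {V W : Type*} {Λ : ℕ} (G : SimpleGraph V) (H : SimpleGraph W)
    (cG : G.edgeSet → Fin Λ) (cH : H.edgeSet → Fin Λ) where
  toIso : G ≃g H
  color_eq : ∀ e : G.edgeSet, cH (toIso.mapEdgeSet e) = cG e

/-- The coloring of the vertex-deleted card at `v`, obtained by restriction. -/
def cardColoring {V : Type*} {Λ : ℕ} (G : SimpleGraph V) (cG : G.edgeSet → Fin Λ)
    (s : Set V) : (G.induce s).edgeSet → Fin Λ :=
  fun e => cG ((SimpleGraph.Embedding.induce s).mapEdgeSet e)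

/-- Colored graphs are reconstructions of each other: a bijection of vertices making
corresponding colored cards isomorphic as colored graphs. -/
def IsColoredReconstruction {V W : Type*} {Λ : ℕ} (G : SimpleGraph V) (H : SimpleGraph W)
    (cG : G.edgeSet → Fin Λ) (cH : H.edgeSet → Fin Λ) : Prop :=
  ∃ f : V ≃ W, ∀ v : V,
    Nonempty (ColoredIso (G.induce {w | w ≠ v}) (H.induce {w | w ≠ f v})
      (cardColoring G cG {w | w ≠ v}) (cardColoring H cH {w | w ≠ f v}))

/-- The coloring of a subgraph of `G`, obtained by restriction of the coloring of `G`. -/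
def subgraphColoring {V : Type*} {Λ : ℕ} {G : SimpleGraph V} (cG : G.edgeSet → Fin Λ)
    (G' : G.Subgraph) : G'.coe.edgeSet → Fin Λ :=
  fun e => cG (G'.hom.mapEdgeSet e)

/-- The number of colored subgraphs of `G` color-isomorphic to the colored graph `(F, cF)`. -/
noncomputable def coloredSubCount {U V : Type*} {Λ : ℕ} (F : SimpleGraph U)
    (cF : F.edgeSet → Fin Λ) (G : SimpleGraph V) (cG : G.edgeSet → Fin Λ) : ℕ :=
  Nat.card {G' : G.Subgraph // Nonempty (ColoredIso F G'.coe cF (subgraphColoring cG G'))}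

section KellyAux

open SimpleGraph

variable {α β γ : Type*} {Λ : ℕ}

lemma hom_mapEdgeSet_comp {A : SimpleGraph α} {B : SimpleGraph β} {C : SimpleGraph γ}
    (f : A →g B) (g : B →g C) (e : A.edgeSet) :
    (g.comp f).mapEdgeSet e = g.mapEdgeSet (f.mapEdgeSet e) :=
  Subtype.ext (by simp [Hom.mapEdgeSet, Sym2.map_map])

/-- Composition of colored isomorphisms. -/
def ColoredIso.trans {A : SimpleGraph α} {B : SimpleGraph β} {C : SimpleGraph γ}
    {cA : A.edgeSet → Fin Λ} {cB : B.edgeSet → Fin Λ} {cC : C.edgeSet → Fin Λ}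
    (i : ColoredIso A B cA cB) (j : ColoredIso B C cB cC) : ColoredIso A C cA cC where
  toIso := j.toIso.comp i.toIso
  color_eq e := by
    have h1 : (j.toIso.comp i.toIso).mapEdgeSet e
        = j.toIso.mapEdgeSet (i.toIso.mapEdgeSet e) :=
      Subtype.ext (by simp [Iso.mapEdgeSet, Hom.mapEdgeSet, Sym2.map_map])
    rw [h1, j.color_eq, i.color_eq]

/-- Inverse of a colored isomorphism. -/
def ColoredIso.symm {A : SimpleGraph α} {B : SimpleGraph β}
    {cA : A.edgeSet → Fin Λ} {cB : B.edgeSet → Fin Λ}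
    (i : ColoredIso A B cA cB) : ColoredIso B A cB cA where
  toIso := i.toIso.symm
  color_eq e := by
    have h2 : i.toIso.mapEdgeSet (i.toIso.symm.mapEdgeSet e) = e :=
      i.toIso.mapEdgeSet.apply_symm_apply e
    have := i.color_eq (i.toIso.symm.mapEdgeSet e)
    rw [h2] at this
    exact this.symm

end KellyAux
section KellyAux2

open SimpleGraph

variable {α β υ : Type*} {Λ : ℕ}

/-- Mapping a subgraph along an embedding gives an isomorphic graph. -/
noncomputable def mapSubgraphIso {A : SimpleGraph α} {B : SimpleGraph β} (f : A ↪g B)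
    (A' : A.Subgraph) : A'.coe ≃g (A'.map f.toHom).coe where
  toEquiv := Equiv.Set.image (⇑f.toHom) A'.verts (fun _ _ h => f.injective h)
  map_rel_iff' := by
    rintro ⟨u, hu⟩ ⟨v, hv⟩
    constructor
    · rintro ⟨a, b, hab, ha, hb⟩
      obtain rfl : a = u := f.injective ha
      obtain rfl : b = v := f.injective hb
      exact hab
    · intro h
      exact ⟨u, v, h, rfl, rfl⟩

/-- Mapping a subgraph along a color-compatible embedding preserves the restricted coloring. -/
noncomputable def mapColoredIso {A : SimpleGraph α} {B : SimpleGraph β}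
    {cA : A.edgeSet → Fin Λ} {cB : B.edgeSet → Fin Λ} (f : A ↪g B)
    (hc : ∀ e, cB (f.toHom.mapEdgeSet e) = cA e) (A' : A.Subgraph) :
    ColoredIso A'.coe (A'.map f.toHom).coe
      (subgraphColoring cA A') (subgraphColoring cB (A'.map f.toHom)) where
  toIso := mapSubgraphIso f A'
  color_eq e := by
    show cB ((A'.map f.toHom).hom.mapEdgeSet ((mapSubgraphIso f A').mapEdgeSet e))
        = cA (A'.hom.mapEdgeSet e)
    rw [← hc (A'.hom.mapEdgeSet e)]
    congr 1
    apply Subtype.ext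
    show Sym2.map ⇑(A'.map f.toHom).hom (Sym2.map ⇑(mapSubgraphIso f A') ↑e)
        = Sym2.map ⇑f.toHom (Sym2.map ⇑A'.hom ↑e)
    rw [Sym2.map_map, Sym2.map_map]
    have hfun : ⇑(A'.map f.toHom).hom ∘ ⇑(mapSubgraphIso f A') = ⇑f.toHom ∘ ⇑A'.hom := by
      funext x
      simp [mapSubgraphIso, Equiv.Set.image, Equiv.Set.imageOfInjOn]
      rfl
    rw [hfun]

/-- Transfer of the copy predicate along colored isomorphism of ambient graphs. -/
noncomputable def copiesEquiv {F : SimpleGraph υ} {cF : F.edgeSet → Fin Λ}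
    {A : SimpleGraph α} {B : SimpleGraph β}
    {cA : A.edgeSet → Fin Λ} {cB : B.edgeSet → Fin Λ} (h : ColoredIso A B cA cB) :
    {A' : A.Subgraph // Nonempty (ColoredIso F A'.coe cF (subgraphColoring cA A'))} ≃
    {B' : B.Subgraph // Nonempty (ColoredIso F B'.coe cF (subgraphColoring cB B'))} where
  toFun A' := ⟨A'.val.map h.toIso.toHom,
    A'.2.map fun i => i.trans (mapColoredIso h.toIso.toEmbedding (fun e => h.color_eq e) A'.val)⟩
  invFun B' := ⟨B'.val.map h.toIso.symm.toHom,
    B'.2.map fun i => i.trans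
      (mapColoredIso h.toIso.symm.toEmbedding (fun e => h.symm.color_eq e) B'.val)⟩
  left_inv A' := by
    apply Subtype.ext
    show (A'.val.map h.toIso.toHom).map h.toIso.symm.toHom = A'.val
    rw [← SimpleGraph.Subgraph.map_comp]
    have : (h.toIso.symm.toHom.comp h.toIso.toHom) = Hom.id :=
      DFunLike.ext _ _ fun x => h.toIso.symm_apply_apply x
    rw [this, SimpleGraph.Subgraph.map_id]
  right_inv B' := by
    apply Subtype.ext
    show (B'.val.map h.toIso.symm.toHom).map h.toIso.toHom = B'.val
    rw [← SimpleGraph.Subgraph.map_comp]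
    have : (h.toIso.toHom.comp h.toIso.symm.toHom) = Hom.id :=
      DFunLike.ext _ _ fun x => h.toIso.apply_symm_apply x
    rw [this, SimpleGraph.Subgraph.map_id]

end KellyAux2
section KellyAux3

open SimpleGraph

variable {V υ : Type*} {Λ : ℕ}

lemma comap_map_induce {G : SimpleGraph V} {s : Set V} (G'' : (G.induce s).Subgraph) :
    Subgraph.comap (Embedding.induce s).toHom (G''.map (Embedding.induce s).toHom) = G'' := by
  ext x y
  · show x ∈ Subtype.val ⁻¹' (Subtype.val '' G''.verts) ↔ x ∈ G''.verts
    rw [Set.preimage_image_eq _ Subtype.val_injective]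
  · show (G.induce s).Adj x y ∧ (∃ a b, G''.Adj a b ∧ (a : V) = x ∧ (b : V) = y) ↔ G''.Adj x y
    constructor
    · rintro ⟨-, a, b, hab, ha, hb⟩
      obtain rfl : a = x := Subtype.ext ha
      obtain rfl : b = y := Subtype.ext hb
      exact hab
    · intro h
      exact ⟨G''.adj_sub h, x, y, h, rfl, rfl⟩

lemma map_comap_induce {G : SimpleGraph V} {s : Set V} {G' : G.Subgraph}
    (hsub : G'.verts ⊆ s) :
    (Subgraph.comap (Embedding.induce s).toHom G').map (Embedding.induce s).toHom = G' := by
  ext x y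
  · show x ∈ Subtype.val '' (Subtype.val ⁻¹' G'.verts) ↔ x ∈ G'.verts
    rw [Set.image_preimage_eq_of_subset (by rwa [Subtype.range_val])]
  · show (∃ a b : s, ((G.induce s).Adj a b ∧ G'.Adj a b) ∧ (a : V) = x ∧ (b : V) = y)
        ↔ G'.Adj x y
    constructor
    · rintro ⟨a, b, ⟨-, hab⟩, rfl, rfl⟩
      exact hab
    · intro h
      exact ⟨⟨x, hsub (G'.edge_vert h)⟩, ⟨y, hsub (G'.edge_vert h.symm)⟩,
        ⟨G'.adj_sub h, h⟩, rfl, rfl⟩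

lemma verts_map_induce {G : SimpleGraph V} {s : Set V} (G'' : (G.induce s).Subgraph) :
    (G''.map (Embedding.induce s).toHom).verts ⊆ s := by
  rintro x ⟨⟨a, ha⟩, -, rfl⟩
  exact ha

/-- Copies of `F` in the card at `s` correspond to copies of `F` in `G` with vertices in `s`. -/
noncomputable def cardCopiesEquiv (F : SimpleGraph υ) (cF : F.edgeSet → Fin Λ)
    (G : SimpleGraph V) (cG : G.edgeSet → Fin Λ) (s : Set V) :
    {G'' : (G.induce s).Subgraph //
        Nonempty (ColoredIso F G''.coe cF (subgraphColoring (cardColoring G cG s) G''))} ≃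
    {G' : G.Subgraph //
        Nonempty (ColoredIso F G'.coe cF (subgraphColoring cG G')) ∧ G'.verts ⊆ s} where
  toFun G'' := ⟨G''.val.map (Embedding.induce s).toHom,
    G''.2.map (fun i => i.trans (mapColoredIso (Embedding.induce s) (fun _ => rfl) G''.val)),
    verts_map_induce G''.val⟩
  invFun G' := ⟨Subgraph.comap (Embedding.induce s).toHom G'.val, by
    obtain ⟨G', hne, hsub⟩ := G'
    obtain ⟨i⟩ := hne
    have j := mapColoredIso (cA := cardColoring G cG s) (cB := cG)
      (Embedding.induce s) (fun _ => rfl)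
      (Subgraph.comap (Embedding.induce s).toHom G')
    rw [map_comap_induce hsub] at j
    exact ⟨i.trans j.symm⟩⟩
  left_inv G'' := Subtype.ext (comap_map_induce G''.val)
  right_inv G' := Subtype.ext (map_comap_induce G'.2.2)

end KellyAux3
section KellyAux4

open SimpleGraph

variable {U V : Type*} {Λ : ℕ}

instance kellyFiniteSubgraph {V : Type*} [Finite V] (G : SimpleGraph V) : Finite G.Subgraph :=
  Finite.of_injective (fun G' => (G'.verts, G'.Adj))
    (fun _ _ h => SimpleGraph.Subgraph.ext (congrArg Prod.fst h) (congrArg Prod.snd h))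

/-- Swapping a sigma of subtypes. -/
def sigmaSubtypeSwap {A B : Type*} (P : A → B → Prop) :
    (Σ a : A, {b : B // P a b}) ≃ (Σ b : B, {a : A // P a b}) where
  toFun x := ⟨x.2.1, x.1, x.2.2⟩
  invFun x := ⟨x.2.1, x.1, x.2.2⟩
  left_inv := fun ⟨_, _, _⟩ => rfl
  right_inv := fun ⟨_, _, _⟩ => rfl

lemma subset_ne_iff {s : Set V} {v : V} : s ⊆ {w | w ≠ v} ↔ v ∉ s :=
  ⟨fun h hv => h hv rfl, fun h _x hx hxv => h (hxv ▸ hx)⟩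

/-- Kelly's counting identity. -/
lemma kelly_sum_card_eq (F : SimpleGraph U) [Fintype U] (cF : F.edgeSet → Fin Λ)
    (G : SimpleGraph V) [Fintype V] (cG : G.edgeSet → Fin Λ) :
    ∑ v : V, coloredSubCount F cF (G.induce {w | w ≠ v}) (cardColoring G cG {w | w ≠ v})
      = coloredSubCount F cF G cG * (Fintype.card V - Fintype.card U) := by
  classical
  haveI : Fintype {G' : G.Subgraph //
      Nonempty (ColoredIso F G'.coe cF (subgraphColoring cG G'))} := Fintype.ofFinite _
  calc ∑ v : V, coloredSubCount F cF (G.induce {w | w ≠ v}) (cardColoring G cG {w | w ≠ v})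
      = ∑ v : V, Nat.card {x : {G' : G.Subgraph //
          Nonempty (ColoredIso F G'.coe cF (subgraphColoring cG G'))} // v ∉ x.val.verts} := by
        refine Finset.sum_congr rfl fun v _ => ?_
        refine Nat.card_congr (((cardCopiesEquiv F cF G cG {w | w ≠ v}).trans
          (Equiv.subtypeEquivRight fun G' => and_congr_right fun _ => subset_ne_iff)).trans
          (Equiv.subtypeSubtypeEquivSubtypeInter _ _).symm)
    _ = Nat.card (Σ v : V, {x : {G' : G.Subgraph //
          Nonempty (ColoredIso F G'.coe cF (subgraphColoring cG G'))} // v ∉ x.val.verts}) := by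
        rw [Nat.card_eq_fintype_card, Fintype.card_sigma]
        simp [Nat.card_eq_fintype_card]
    _ = Nat.card (Σ x : {G' : G.Subgraph //
          Nonempty (ColoredIso F G'.coe cF (subgraphColoring cG G'))}, {v : V // v ∉ x.val.verts}) :=
        Nat.card_congr (sigmaSubtypeSwap (fun (v : V) (x : {G' : G.Subgraph //
          Nonempty (ColoredIso F G'.coe cF (subgraphColoring cG G'))}) => v ∉ x.val.verts))
    _ = ∑ x : {G' : G.Subgraph //
          Nonempty (ColoredIso F G'.coe cF (subgraphColoring cG G'))},
          Nat.card {v : V // v ∉ x.val.verts} := by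
        rw [Nat.card_eq_fintype_card, Fintype.card_sigma]
        simp [Nat.card_eq_fintype_card]
    _ = ∑ _x : {G' : G.Subgraph //
          Nonempty (ColoredIso F G'.coe cF (subgraphColoring cG G'))},
          (Fintype.card V - Fintype.card U) := by
        refine Finset.sum_congr rfl fun x _ => ?_
        obtain ⟨i⟩ := x.2
        rw [Nat.card_eq_fintype_card, Fintype.card_subtype_compl]
        congr 1
        exact (Fintype.card_congr i.toIso.toEquiv).symm
    _ = coloredSubCount F cF G cG * (Fintype.card V - Fintype.card U) := by
        rw [Finset.sum_const, Finset.card_univ, smul_eq_mul, coloredSubCount,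
          Nat.card_eq_fintype_card]

end KellyAux4
/-- Kelly's lemma for edge-colored graphs. -/
theorem stmt_4 {U V W : Type*} {Λ : ℕ} [Fintype U] [Fintype V] [Fintype W]
    (F : SimpleGraph U) (G : SimpleGraph V) (H : SimpleGraph W)
    (cF : F.edgeSet → Fin Λ) (cG : G.edgeSet → Fin Λ) (cH : H.edgeSet → Fin Λ)
    (hrec : IsColoredReconstruction G H cG cH) (hF : Fintype.card U < Fintype.card V) :
    coloredSubCount F cF G cG = coloredSubCount F cF H cH := by
  classical
  obtain ⟨φ, hφ⟩ := hrec
  have hVW : Fintype.card V = Fintype.card W := Fintype.card_congr φ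
  have h1 := kelly_sum_card_eq F cF G cG
  have h2 := kelly_sum_card_eq F cF H cH
  have hsum : ∑ v : V, coloredSubCount F cF (G.induce {w | w ≠ v})
        (cardColoring G cG {w | w ≠ v})
      = ∑ w : W, coloredSubCount F cF (H.induce {x | x ≠ w})
        (cardColoring H cH {x | x ≠ w}) := by
    rw [← Equiv.sum_comp φ (fun w => coloredSubCount F cF (H.induce {x | x ≠ w})
      (cardColoring H cH {x | x ≠ w}))]
    exact Finset.sum_congr rfl fun v _ =>
      Nat.card_congr (copiesEquiv (Classical.choice (hφ v)))
  rw [h1, hVW, h2] at hsum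
  exact Nat.eq_of_mul_eq_mul_right (by omega) hsum
end

section
/- Let A be a symmetric matrix over a field with zero diagonal indexed by a finite set V with |V| ≥ 2. If det(A) = 0, then the rank of A equals the maximum over v ∈ V of the rank of the principal submatrix A_{V∖{v}} obtained by deleting row and column v. -/
/-!
Since `det A = 0`, some row `A v` is a linear combination of the other rows, so deleting row `v`
does not change the rank, and by symmetry neither does deleting column `v`. The row relation
survives the deletion of column `v`, so row `v` can then be deleted as well: `A_{V∖{v}}` has the
rank of `A`, and no submatrix has larger rank.
-/

open Matrix Set Submodule

namespace Matrix

variable {m n K : Type*} [Field K]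

theorem rank_submatrix_row_eq_of_mem_span [Finite m] [Fintype n] {m₀ : Type*} [Finite m₀]
    (A : Matrix m n K) (r : m₀ → m) (h : ∀ i, A i ∈ span K (range fun j => A (r j))) :
    (A.submatrix r id).rank = A.rank := by
  rw [rank_eq_finrank_span_row, rank_eq_finrank_span_row]
  exact congrArg (fun S : Submodule K (n → K) => Module.finrank K S) <|
    span_eq_span (range_subset_iff.mpr fun j => subset_span (mem_range_self (r j)))
      (range_subset_iff.mpr h)

theorem rank_submatrix_compl_row_eq [Finite m] [Fintype n] (A : Matrix m n K) (v : m)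
    (hv : A v ∈ span K (range fun w : {w // w ≠ v} => A w)) :
    (A.submatrix ((↑) : {w // w ≠ v} → m) id).rank = A.rank := by
  refine rank_submatrix_row_eq_of_mem_span A _ fun i => ?_
  by_cases hi : i = v
  · exact hi ▸ hv
  · exact subset_span ⟨⟨i, hi⟩, rfl⟩

theorem submatrix_id_apply_mem_span_of_mem_span {m₀ n₀ : Type*} (A : Matrix m n K)
    (c : n₀ → n) {v : m} {r : m₀ → m} (hv : A v ∈ span K (range fun j => A (r j))) :
    A.submatrix id c v ∈ span K (range fun j => A.submatrix id c (r j)) := by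
  have := apply_mem_span_image_of_mem_span (LinearMap.funLeft K K c) hv
  rwa [← range_comp] at this

theorem exists_row_mem_span_of_det_eq_zero [Fintype n] [DecidableEq n] {A : Matrix n n K}
    (hA : A.det = 0) :
    ∃ v, A v ∈ span K (range fun w : {w // w ≠ v} => A w) := by
  have hdep : ¬ LinearIndependent K A.row := by
    rw [linearIndependent_rows_iff_isUnit, isUnit_iff_isUnit_det, hA]
    exact not_isUnit_zero
  simp only [linearIndependent_iff_notMem_span, not_forall, not_not] at hdep
  obtain ⟨v, hv⟩ := hdep
  exact ⟨v, by rwa [← compl_eq_univ_sdiff, image_eq_range] at hv⟩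

theorem IsSymm.rank_submatrix_compl_eq [Fintype n] [DecidableEq n] {A : Matrix n n K}
    (hA : A.IsSymm) (v : n) (hv : A v ∈ span K (range fun w : {w // w ≠ v} => A w)) :
    (A.submatrix ((↑) : {w // w ≠ v} → n) ((↑) : {w // w ≠ v} → n)).rank = A.rank := by
  set C := A.submatrix id ((↑) : {w // w ≠ v} → n)
  have hC : C v ∈ span K (range fun w : {w // w ≠ v} => C w) :=
    submatrix_id_apply_mem_span_of_mem_span A _ hv
  calc (A.submatrix ((↑) : {w // w ≠ v} → n) ((↑) : {w // w ≠ v} → n)).rank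
      = (C.submatrix ((↑) : {w // w ≠ v} → n) id).rank := rfl
    _ = C.rank := rank_submatrix_compl_row_eq C v hC
    _ = (A.submatrix ((↑) : {w // w ≠ v} → n) id).rank := by
      rw [← rank_transpose, transpose_submatrix, hA.eq]
    _ = A.rank := rank_submatrix_compl_row_eq A v hv

end Matrix

theorem stmt_7_general {V : Type*} [Fintype V] [DecidableEq V] {K : Type*} [Field K]
    (A : Matrix V V K) (hsymm : A.IsSymm) (hdet : A.det = 0) :
    A.rank = Finset.univ.sup (fun v : V =>
      (A.submatrix (Subtype.val : {w : V // w ≠ v} → V)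
        (Subtype.val : {w : V // w ≠ v} → V)).rank) := by
  refine le_antisymm ?_ (Finset.sup_le fun w _ => rank_submatrix_le A _ _)
  obtain ⟨v, hv⟩ := exists_row_mem_span_of_det_eq_zero hdet
  refine le_trans ?_ (Finset.le_sup (Finset.mem_univ v))
  exact (Matrix.IsSymm.rank_submatrix_compl_eq hsymm v hv).ge

/-- If a symmetric matrix with zero diagonal over a field is singular, its rank equals the
maximum of the ranks of its co-order-one principal submatrices. -/
theorem stmt_7 {V : Type*} [Fintype V] [DecidableEq V] {K : Type*} [Field K]
    (A : Matrix V V K) (hsymm : A.IsSymm) (hdiag : ∀ v : V, A v v = 0)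
    (hcard : 2 ≤ Fintype.card V) (hdet : A.det = 0) :
    A.rank = Finset.univ.sup (fun v : V =>
      (A.submatrix (Subtype.val : {w : V // w ≠ v} → V)
        (Subtype.val : {w : V // w ≠ v} → V)).rank) :=
  stmt_7_general A hsymm hdet
end

section
/- Let A be an n×n symmetric matrix over a field. Then rank(A) = n if and only if det(A) ≠ 0, and if rank(A) < n then there exists an index v such that the principal submatrix obtained by deleting row and column v has the same rank as A. -/
/-!
Full rank means linearly independent rows, i.e. an invertible matrix. If the rank is
deficient, some row `v` is a combination of the others, so deleting row `v` keeps the row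
space. For a symmetric matrix the same dependency, read on columns, shows that column `v`
of the remaining matrix is a combination of its other columns, so deleting it as well keeps
the rank.
-/

open Matrix Module Submodule Set

namespace Matrix

variable {m n K : Type*} [Field K] [Fintype n]

theorem linearIndependent_row_iff_rank_eq_card [Fintype m] (A : Matrix m n K) :
    LinearIndependent K A.row ↔ A.rank = Fintype.card m := by
  rw [rank_eq_finrank_span_row, linearIndependent_iff_card_eq_finrank_span, Set.finrank, eq_comm]

theorem rank_eq_card_iff_det_ne_zero [DecidableEq n] (A : Matrix n n K) :
    A.rank = Fintype.card n ↔ A.det ≠ 0 := by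
  rw [← linearIndependent_row_iff_rank_eq_card, linearIndependent_rows_iff_isUnit,
    isUnit_iff_isUnit_det, isUnit_iff_ne_zero]

theorem exists_row_mem_span_image_compl_of_rank_lt_card [Fintype m] {A : Matrix m n K}
    (h : A.rank < Fintype.card m) : ∃ v, A.row v ∈ span K (A.row '' {v}ᶜ) := by
  have hdep : ¬ LinearIndependent K A.row := fun hli => h.ne hli.rank_matrix
  simpa [linearIndependent_iff_notMem_span, compl_eq_univ_sdiff] using hdep

theorem rank_submatrix_val_id_of_row_mem_span [Finite m] {A : Matrix m n K} {v : m}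
    (hv : A.row v ∈ span K (A.row '' {v}ᶜ)) :
    (A.submatrix (Subtype.val : {w // w ≠ v} → m) id).rank = A.rank := by
  have hrange :
      range (A.submatrix (Subtype.val : {w // w ≠ v} → m) id).row = A.row '' {v}ᶜ := by
    rw [← Subtype.range_coe (s := {v}ᶜ), ← range_comp]
    rfl
  have hspan : span K (A.row '' {v}ᶜ) = span K (range A.row) := by
    rw [← image_univ, ← union_compl_self {v}, image_union, image_singleton, singleton_union,
      span_insert_eq_span hv]
  rw [rank_eq_finrank_span_row, rank_eq_finrank_span_row, hrange, hspan]

theorem rank_submatrix_id_val_of_col_mem_span [Fintype m] [DecidableEq n] {A : Matrix m n K}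
    {v : n} (hv : A.col v ∈ span K (A.col '' {v}ᶜ)) :
    (A.submatrix id (Subtype.val : {w // w ≠ v} → n)).rank = A.rank := by
  rw [← rank_transpose, transpose_submatrix, rank_submatrix_val_id_of_row_mem_span hv,
    rank_transpose]

theorem IsSymm.rank_submatrix_val_val_of_row_mem_span [DecidableEq n] {A : Matrix n n K}
    (hA : A.IsSymm) {v : n} (hv : A.row v ∈ span K (A.row '' {v}ᶜ)) :
    (A.submatrix (Subtype.val : {w // w ≠ v} → n) (Subtype.val : {w // w ≠ v} → n)).rank =
      A.rank := by
  let B := A.submatrix (Subtype.val : {w // w ≠ v} → n) id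
  -- By symmetry the columns of `B` are the rows of `A` restricted to `{v}ᶜ`.
  have hcol : B.col = fun j => LinearMap.funLeft K K Subtype.val (A.row j) := by
    ext j w
    exact hA.apply j w
  have hBv : B.col v ∈ span K (B.col '' {v}ᶜ) := by
    rw [hcol, ← image_image]
    exact apply_mem_span_image_of_mem_span _ hv
  exact (rank_submatrix_id_val_of_col_mem_span hBv).trans
    (rank_submatrix_val_id_of_row_mem_span hv)

end Matrix

/-- A symmetric matrix over a field has full rank iff its determinant is nonzero, and if it
is not of full rank then some co-order-one principal submatrix has the same rank. -/
theorem stmt_8 {n : ℕ} {K : Type*} [Field K]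
    (A : Matrix (Fin n) (Fin n) K) (hsymm : A.IsSymm) :
    (A.rank = n ↔ A.det ≠ 0) ∧
      (A.rank < n → ∃ v : Fin n,
        (A.submatrix (Subtype.val : {w : Fin n // w ≠ v} → Fin n)
          (Subtype.val : {w : Fin n // w ≠ v} → Fin n)).rank = A.rank) := by
  refine ⟨by simpa using A.rank_eq_card_iff_det_ne_zero, fun hlt => ?_⟩
  obtain ⟨v, hv⟩ := exists_row_mem_span_image_compl_of_rank_lt_card (A := A) (by simpa using hlt)
  exact ⟨v, hsymm.rank_submatrix_val_val_of_row_mem_span hv⟩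
end

section
/- If G and H are reconstructions of each other with at least three vertices, then for every k with 3 ≤ k < |V(G)|, G and H contain the same number of cycles of length k (as subgraphs). -/
open SimpleGraph

/-- `subCount F G` is the number of subgraphs of `G` isomorphic to `F`. -/
noncomputable def subCount {U V : Type*} (F : SimpleGraph U) (G : SimpleGraph V) : ℕ :=
  Nat.card {G' : G.Subgraph // Nonempty (F ≃g G'.coe)}

/-! Kelly's lemma: every copy of `F` in `G` misses exactly `|V| - |U|` vertices, so counting
pairs (vertex `v`, copy of `F` avoiding `v`) gives
`∑ v, subCount F (G - v) = subCount F G * (|V| - |U|)`.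
The left side only depends on the deck of `G`, and the factor `|V| - |U|` is nonzero when
`|U| < |V|`. -/

open Finset

namespace SimpleGraph

variable {U V W : Type*} {F : SimpleGraph U} {G : SimpleGraph V} {G' : SimpleGraph W}

namespace Subgraph

lemma comap_map_of_injective {f : G →g G'} (hf : Function.Injective f) (S : G.Subgraph) :
    (S.map f).comap f = S := by
  ext u v
  · simp [hf.mem_set_image]
  · simp only [comap_adj, map_adj, Relation.map_apply, hf.eq_iff, exists_eq_right_right,
      exists_eq_right]
    exact ⟨And.right, fun h => ⟨S.adj_sub h, h⟩⟩

lemma map_comap_of_verts_subset_range (f : G ↪g G') {S : G'.Subgraph}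
    (h : S.verts ⊆ Set.range f) : (S.comap f.toHom).map f.toHom = S := by
  ext a b
  · change a ∈ f '' (f ⁻¹' S.verts) ↔ a ∈ S.verts
    rw [Set.image_preimage_eq_of_subset h]
  · constructor
    · rintro ⟨u, v, ⟨-, huv⟩, rfl, rfl⟩
      exact huv
    · intro hab
      obtain ⟨u, rfl⟩ := h (S.edge_vert hab)
      obtain ⟨v, rfl⟩ := h (S.edge_vert hab.symm)
      exact ⟨u, v, ⟨f.map_adj_iff.1 (S.adj_sub hab), hab⟩, rfl, rfl⟩

end Subgraph

lemma Copy.nonempty_iso_map_iff (f : G.Copy G') (S : G.Subgraph) :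
    Nonempty (F ≃g (S.map f.toHom).coe) ↔ Nonempty (F ≃g S.coe) :=
  ⟨fun ⟨e⟩ => ⟨e.trans (f.isoSubgraphMap S).symm⟩,
    fun ⟨e⟩ => ⟨e.trans (f.isoSubgraphMap S)⟩⟩

lemma subCount_eq_card_of_embedding (f : G ↪g G') :
    subCount F G =
      Nat.card {S : G'.Subgraph // Nonempty (F ≃g S.coe) ∧ S.verts ⊆ Set.range f} := by
  refine Nat.card_congr (Equiv.ofBijective
    (fun S => ⟨S.1.map f.toHom, (f.toCopy.nonempty_iso_map_iff S.1).2 S.2,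
      Set.image_subset_range _ _⟩) ⟨?_, ?_⟩)
  · intro S T hST
    have := congrArg (fun S' => (Subtype.val S').comap f.toHom) hST
    simpa only [Subgraph.comap_map_of_injective (f := f.toHom) f.injective, Subtype.ext_iff]
      using this
  · rintro ⟨S, hS, hrange⟩
    have hmap := Subgraph.map_comap_of_verts_subset_range f hrange
    refine ⟨⟨S.comap f.toHom, (f.toCopy.nonempty_iso_map_iff _).1 ?_⟩, Subtype.ext hmap⟩
    rwa [show f.toCopy.toHom = f.toHom from rfl, hmap]

lemma subCount_congr (e : G ≃g G') : subCount F G = subCount F G' := by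
  rw [subCount_eq_card_of_embedding e.toEmbedding, subCount]
  refine Nat.card_congr (Equiv.subtypeEquivRight fun S => ?_)
  simp [e.surjective.range_eq]

lemma subCount_induce (s : Set V) :
    subCount F (G.induce s) =
      Nat.card {S : G.Subgraph // Nonempty (F ≃g S.coe) ∧ S.verts ⊆ s} := by
  rw [subCount_eq_card_of_embedding (Embedding.induce s)]
  have hrange : Set.range (Embedding.induce (G := G) s) = s := Subtype.range_coe
  rw [hrange]

theorem sum_subCount_induce_ne [Fintype U] [Fintype V] (F : SimpleGraph U) (G : SimpleGraph V) :
    ∑ v, subCount F (G.induce {w | w ≠ v}) =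
      subCount F G * (Fintype.card V - Fintype.card U) := by
  classical
  let copies := (univ : Finset G.Subgraph).filter fun S => Nonempty (F ≃g S.coe)
  have hcount : subCount F G = #copies := by
    rw [subCount, Nat.card_eq_fintype_card, Fintype.card_subtype]
  have hdel (v : V) : subCount F (G.induce {w | w ≠ v}) = #(copies.filter (v ∉ ·.verts)) := by
    rw [subCount_induce, Nat.card_eq_fintype_card, Fintype.card_subtype, filter_filter]
    simp only [← Set.compl_singleton_eq, Set.subset_compl_singleton_iff]
  have hmiss (S : G.Subgraph) (hS : S ∈ copies) :
      #(univ.filter (· ∉ S.verts)) = Fintype.card V - Fintype.card U := by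
    obtain ⟨e⟩ := (mem_filter.1 hS).2
    rw [← Fintype.card_subtype, Fintype.card_subtype_compl, Fintype.card_congr e.toEquiv]
  calc ∑ v, subCount F (G.induce {w | w ≠ v})
      = ∑ v, #(copies.bipartiteBelow (fun S v => v ∉ S.verts) v) :=
        sum_congr rfl fun v _ => hdel v
    _ = ∑ S ∈ copies, #(univ.bipartiteAbove (fun S v => v ∉ S.verts) S) :=
        (sum_card_bipartiteAbove_eq_sum_card_bipartiteBelow _).symm
    _ = ∑ S ∈ copies, (Fintype.card V - Fintype.card U) := sum_congr rfl hmiss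
    _ = subCount F G * (Fintype.card V - Fintype.card U) := by rw [sum_const, smul_eq_mul, hcount]

end SimpleGraph

theorem IsReconstruction.subCount_eq {U V W : Type*} [Fintype U] [Fintype V] [Fintype W]
    {G : SimpleGraph V} {H : SimpleGraph W} (hrec : IsReconstruction G H) (F : SimpleGraph U)
    (hF : Fintype.card U < Fintype.card V) : subCount F G = subCount F H := by
  obtain ⟨f, hf⟩ := hrec
  have hdeck :
      ∑ v, subCount F (G.induce {w | w ≠ v}) = ∑ w, subCount F (H.induce {x | x ≠ w}) :=
    f.sum_comp (fun w => subCount F (H.induce {x | x ≠ w})) ▸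
      sum_congr rfl fun v _ => subCount_congr (hf v).some
  rw [sum_subCount_induce_ne, sum_subCount_induce_ne, ← Fintype.card_congr f] at hdeck
  exact Nat.eq_of_mul_eq_mul_right (Nat.sub_pos_of_lt hF) hdeck

theorem stmt_17_general {V W : Type*} [Fintype V] [Fintype W]
    (G : SimpleGraph V) (H : SimpleGraph W)
    (hrec : IsReconstruction G H) :
    ∀ k : ℕ, 3 ≤ k → k < Fintype.card V →
      subCount (SimpleGraph.cycleGraph k) G = subCount (SimpleGraph.cycleGraph k) H :=
  fun k _ hk => hrec.subCount_eq _ (by simpa using hk)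

/-- Reconstructions contain the same number of cycles of each length `k < |V(G)|`. -/
theorem stmt_17 {V W : Type*} [Fintype V] [Fintype W]
    (G : SimpleGraph V) (H : SimpleGraph W)
    (hrec : IsReconstruction G H) (hcard : 3 ≤ Fintype.card V) :
    ∀ k : ℕ, 3 ≤ k → k < Fintype.card V →
      subCount (SimpleGraph.cycleGraph k) G = subCount (SimpleGraph.cycleGraph k) H :=
  stmt_17_general G H hrec
end
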